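/- Let u ∈ l_1(ℕ) be a non-zero absolutely summable real sequence, and let Φ : l_∞(ℕ) → ℝ be the functional Φ(x) = Σ_{n∈ℕ} u_n x_n. Then the kernel V := ker(Φ) ⊆ l_∞(ℕ) is injective as a metric space with the induced metric if and only if ‖u‖₁ ≤ 2 ‖u‖_∞, where ‖u‖₁ = Σ_{n∈ℕ} |u_n| and ‖u‖_∞ = sup_{n∈ℕ} |u_n|. -/

import Mathlib

/-!
Injective metric spaces are exactly the hyperconvex ones: those in which every family of closed
balls `B(cᵢ, rᵢ)` with `d(cᵢ, cⱼ) ≤ rᵢ + rⱼ` has a common point. Closed balls of `ℓ^∞` are boxes,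
so for balls centred in `V = ker Φ` the question is whether `Φ` vanishes on the box in which they
meet. Since `uₙ → 0`, `‖u‖_∞ = |u_m|` for some `m`.

If `‖u‖₁ ≤ 2|u_m|`, let `y` be the corner of the box minimising `Φ` and `B(c, r)` a ball that
nearly realises the coordinate `y_m`. As `Φ c = 0`,
`Φ y = Φ (y - c) ≤ |u_m| (ε - r) + (‖u‖₁ - |u_m|) r ≤ |u_m| ε`. So `Φ ≤ 0` somewhere on the box,
likewise `Φ ≥ 0`, and the box is convex.

If `‖u‖₁ > 2|u_m|`, pick a finite `F ∋ m` with `S_F = ∑_{n ∈ F} |uₙ| > ‖u‖₁ / 2 + |u_m|`, and put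
`a_k = S_F / |u_k|`, `K = a_m / 2`. The balls centred at `sgn u · (a_k e_k - 1_F) ∈ V`, `k ∈ F`,
with radii `a_k - K` satisfy the condition pairwise, but a common point `x` has
`u_k x_k ≥ (K - 1) |u_k|` on `F` and `|xₙ| ≤ K` off `F`, whence `Φ x ≥ K (2 S_F - ‖u‖₁) - S_F > 0`.
-/

universe u v w

/-- A metric space `X` is injective if for every pair of metric spaces `A`, `B`, every
isometric embedding `ι : A → B` and every `1`-Lipschitz map `f : A → X`, there is a
`1`-Lipschitz map `g : B → X` with `g ∘ ι = f`. -/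
def IsInjectiveMetricSpace (X : Type u) [MetricSpace X] : Prop :=
  ∀ ⦃A : Type v⦄ ⦃B : Type w⦄ [MetricSpace A] [MetricSpace B],
    ∀ ι : A → B, Isometry ι → ∀ f : A → X, LipschitzWith 1 f →
      ∃ g : B → X, LipschitzWith 1 g ∧ ∀ a, g (ι a) = f a

open Set Filter Metric Topology
open scoped lp ENNReal

def Hyperconvex (X : Type u) [MetricSpace X] : Prop :=
  ∀ D : Set (X × ℝ), (∀ p ∈ D, ∀ q ∈ D, dist p.1 q.1 ≤ p.2 + q.2) →
    ∃ x : X, ∀ p ∈ D, dist x p.1 ≤ p.2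

section InjectiveHyperconvex

variable {X : Type u} [MetricSpace X]

theorem Hyperconvex.exists_dist_le {B : Type w} [MetricSpace B] (hX : Hyperconvex X)
    {G : Set (B × X)} (hG : ∀ p ∈ G, ∀ q ∈ G, dist p.2 q.2 ≤ dist p.1 q.1) (b : B) :
    ∃ x : X, ∀ p ∈ G, dist x p.2 ≤ dist b p.1 := by
  obtain ⟨x, hx⟩ := hX ((fun p : B × X => (p.2, dist b p.1)) '' G) <| by
    rintro _ ⟨p, hp, rfl⟩ _ ⟨q, hq, rfl⟩
    exact (hG p hp q hq).trans (dist_triangle_left _ _ _)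
  exact ⟨x, fun p hp => hx _ ⟨p, hp, rfl⟩⟩

theorem Hyperconvex.isInjectiveMetricSpace (hX : Hyperconvex X) :
    IsInjectiveMetricSpace.{u, v, w} X := by
  intro A B _ _ ι hι f hf
  let 𝒮 : Set (Set (B × X)) := {G | (∀ p ∈ G, ∀ q ∈ G, dist p.2 q.2 ≤ dist p.1 q.1) ∧
    range (fun a => (ι a, f a)) ⊆ G}
  have hgraph : range (fun a => (ι a, f a)) ∈ 𝒮 := by
    refine ⟨?_, subset_rfl⟩
    rintro _ ⟨a, rfl⟩ _ ⟨a', rfl⟩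
    simpa [hι.dist_eq] using hf.dist_le_mul a a'
  obtain ⟨G, -, hG⟩ := zorn_subset_nonempty 𝒮 (fun c hc hchain ⟨G₀, hG₀⟩ => by
    refine ⟨⋃₀ c, ⟨?_, (hc hG₀).2.trans (subset_sUnion_of_mem hG₀)⟩,
      fun _ => subset_sUnion_of_mem⟩
    rintro p ⟨s, hs, hp⟩ q ⟨t, ht, hq⟩
    rcases hchain.total hs ht with hst | hts
    · exact (hc ht).1 p (hst hp) q hq
    · exact (hc hs).1 p hp q (hts hq)) _ hgraph
  have htotal : ∀ b, ∃ x, (b, x) ∈ G := fun b => by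
    obtain ⟨x, hx⟩ := hX.exists_dist_le hG.prop.1 b
    refine ⟨x, hG.mem_of_prop_insert ⟨?_, hG.prop.2.trans (subset_insert _ _)⟩⟩
    rintro p (rfl | hp) q (rfl | hq)
    · simp
    · exact hx q hq
    · simpa [dist_comm] using hx p hp
    · exact hG.prop.1 p hp q hq
  choose g hg using htotal
  refine ⟨g, LipschitzWith.of_dist_le_mul fun b b' => ?_, fun a => ?_⟩
  · simpa using hG.prop.1 _ (hg b) _ (hg b')
  · simpa using hG.prop.1 _ (hg (ι a)) _ (hG.prop.2 ⟨a, rfl⟩)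

theorem IsInjectiveMetricSpace.nonempty (hX : IsInjectiveMetricSpace.{u, v, w} X) :
    Nonempty X := by
  obtain ⟨g, -⟩ := hX (A := ULift.{v} Empty) (B := ULift.{w} Unit) (fun a => a.down.elim)
    isometry_subsingleton (fun a => a.down.elim)
    (LipschitzWith.of_dist_le_mul fun a => a.down.elim)
  exact ⟨g ⟨()⟩⟩

@[reducible] noncomputable def optionMetricSpace (ρ : X → ℝ) (hpos : ∀ x, 0 < ρ x)
    (hlip : ∀ x y, ρ x ≤ ρ y + dist x y) (hsum : ∀ x y, dist x y ≤ ρ x + ρ y) :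
    MetricSpace (Option X) where
  dist
    | none, none => 0
    | none, some x => ρ x
    | some x, none => ρ x
    | some x, some y => dist x y
  dist_self := by rintro (_ | x) <;> simp
  dist_comm := by rintro (_ | x) (_ | y) <;> simp [dist_comm]
  dist_triangle := by
    rintro (_ | x) (_ | y) (_ | z)
    · simp
    · linarith [hpos z]
    · linarith [hpos y]
    · linarith [hlip z y, dist_comm y z]
    · linarith [hpos x]
    · exact hsum x z
    · linarith [hlip x y]
    · exact dist_triangle x y z
  eq_of_dist_eq_zero := by
    rintro (_ | x) (_ | y) h
    · rfl
    · exact absurd h (hpos y).ne'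
    · exact absurd h (hpos x).ne'
    · exact congrArg some (dist_eq_zero.1 h)

theorem IsInjectiveMetricSpace.exists_forall_dist_le
    (hX : IsInjectiveMetricSpace.{u, max u v, max u w} X) (ρ : X → ℝ) (hpos : ∀ x, 0 < ρ x)
    (hlip : ∀ x y, ρ x ≤ ρ y + dist x y) (hsum : ∀ x y, dist x y ≤ ρ x + ρ y) :
    ∃ z : X, ∀ x, dist z x ≤ ρ x := by
  let := optionMetricSpace ρ hpos hlip hsum
  obtain ⟨g, hg, hgx⟩ := hX (fun x : ULift X => ULift.up (some x.down))
    (Isometry.of_dist_eq fun _ _ => rfl) ULift.down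
    (LipschitzWith.of_dist_le_mul fun _ _ => by simp [ULift.dist_eq])
  refine ⟨g ⟨none⟩, fun x => ?_⟩
  calc dist (g ⟨none⟩) x = dist (g ⟨none⟩) (g ⟨some x⟩) := by rw [hgx ⟨x⟩]
    _ ≤ (1 : NNReal) * ρ x := hg.dist_le_mul ⟨none⟩ ⟨some x⟩
    _ = ρ x := one_mul _

theorem IsInjectiveMetricSpace.hyperconvex
    (hX : IsInjectiveMetricSpace.{u, max u v, max u w} X) : Hyperconvex X := by
  intro D hD
  rcases D.eq_empty_or_nonempty with rfl | hne
  · obtain ⟨x⟩ := hX.nonempty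
    exact ⟨x, fun _ h => h.elim⟩
  have := hne.to_subtype
  -- adjoin a point at distance `ρ x` from each `x`; where `ρ` vanishes, `x` is in every ball
  let ρ : X → ℝ := fun x => ⨅ p : D, (p.1.2 + dist p.1.1 x)
  have hρ_le : ∀ x, ∀ p ∈ D, ρ x ≤ p.2 + dist p.1 x := fun x p hp => by
    refine ciInf_le ⟨0, ?_⟩ (⟨p, hp⟩ : D)
    rintro _ ⟨q, rfl⟩
    linarith [hD q.1 q.2 q.1 q.2, dist_self q.1.1, dist_nonneg (x := q.1.1) (y := x)]
  have hle_ρ : ∀ x a, (∀ p ∈ D, a ≤ p.2 + dist p.1 x) → a ≤ ρ x := fun x a h =>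
    le_ciInf fun p => h p.1 p.2
  have hball : ∀ x, ∀ p ∈ D, dist x p.1 ≤ p.2 + ρ x := fun x p hp => by
    have := hle_ρ x (dist x p.1 - p.2) fun q hq => by
      linarith [hD p hp q hq, dist_triangle x q.1 p.1, dist_comm x q.1, dist_comm p.1 q.1]
    linarith
  by_cases h0 : ∃ x, ρ x ≤ 0
  · obtain ⟨x, hx⟩ := h0
    exact ⟨x, fun p hp => by linarith [hball x p hp]⟩
  push Not at h0
  obtain ⟨z, hz⟩ := hX.exists_forall_dist_le ρ h0
    (fun x y => by
      have := hle_ρ y (ρ x - dist x y) fun p hp => by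
        linarith [hρ_le x p hp, dist_triangle p.1 y x, dist_comm x y]
      linarith)
    (fun x y => by
      have := hle_ρ y (dist x y - ρ x) fun p hp => by
        linarith [hball x p hp, dist_triangle x p.1 y]
      linarith)
  exact ⟨z, fun p hp => (hz p.1).trans (by simpa using hρ_le p.1 p hp)⟩

end InjectiveHyperconvex

theorem lp.dist_apply_le_dist {ι : Type*} {E : ι → Type*} [∀ i, NormedAddCommGroup (E i)]
    (x y : lp E ∞) (i : ι) : dist (x i) (y i) ≤ dist x y := by
  simpa [dist_eq_norm] using lp.norm_apply_le_norm ENNReal.top_ne_zero (x - y) i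

theorem lp.dist_le_of_forall_dist_le {ι : Type*} {E : ι → Type*}
    [∀ i, NormedAddCommGroup (E i)] {x y : lp E ∞} {r : ℝ} (hr : 0 ≤ r)
    (h : ∀ i, dist (x i) (y i) ≤ r) : dist x y ≤ r := by
  simpa [dist_eq_norm] using lp.norm_le_of_forall_le hr fun i => by simpa [dist_eq_norm] using h i

theorem exists_forall_abs_le_abs_of_tendsto_zero {ι : Type*} [Nonempty ι] {f : ι → ℝ}
    (hf : Tendsto f cofinite (𝓝 0)) : ∃ m, ∀ n, |f n| ≤ |f m| := by
  by_cases h : ∀ n, f n = 0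
  · exact ⟨Classical.arbitrary ι, fun n => by simp [h]⟩
  push Not at h
  obtain ⟨n₁, hn₁⟩ := h
  have hfin : {n | |f n₁| ≤ |f n|}.Finite := by
    simpa using eventually_cofinite.1 (hf.abs.eventually (gt_mem_nhds (by simpa using hn₁)))
  obtain ⟨m, hm₁, hm⟩ := exists_max_image _ (fun n => |f n|) hfin ⟨n₁, by simp⟩
  refine ⟨m, fun n => ?_⟩
  by_cases hn : |f n₁| ≤ |f n|
  · exact hm n hn
  · exact (not_le.1 hn).le.trans hm₁

theorem Convex.exists_mem_eq_zero_of_nonpos_of_nonneg {E : Type*} [AddCommGroup E]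
    [Module ℝ E] {s : Set E} (hs : Convex ℝ s) (φ : E →ₗ[ℝ] ℝ) {x y : E} (hx : x ∈ s)
    (hy : y ∈ s) (hφx : φ x ≤ 0) (hφy : 0 ≤ φ y) : ∃ z ∈ s, φ z = 0 :=
  (convex_iff_ordConnected.1 (hs.linear_image φ)).out (mem_image_of_mem φ hx)
    (mem_image_of_mem φ hy) ⟨hφx, hφy⟩

theorem exists_forall_abs_sub_le_and_sub_lt {ι : Type*} [Nonempty ι] (a r : ι → ℝ)
    (h : ∀ i j, a i - r i ≤ a j + r j) :
    ∃ t, (∀ i, |t - a i| ≤ r i) ∧ ∀ ε > 0, ∃ i, t - a i < ε - r i := by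
  obtain ⟨i₀⟩ := ‹Nonempty ι›
  have hbdd : BddAbove (range fun i => a i - r i) := ⟨a i₀ + r i₀, forall_mem_range.2 (h · i₀)⟩
  refine ⟨⨆ i, (a i - r i), fun i => abs_le.2 ⟨?_, ?_⟩, fun ε hε => ?_⟩
  · linarith [le_ciSup hbdd i]
  · linarith [ciSup_le (h · i)]
  · obtain ⟨i, hi⟩ := exists_lt_of_lt_ciSup (sub_lt_self (⨆ i, (a i - r i)) hε)
    exact ⟨i, by linarith⟩

theorem exists_forall_abs_sub_le_and_mul_sub_le {ι : Type*} [Nonempty ι] (a r : ι → ℝ)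
    (h : ∀ i j, a i - r i ≤ a j + r j) (s : ℝ) :
    ∃ t, (∀ i, |t - a i| ≤ r i) ∧ ∀ ε > 0, ∃ i, s * (t - a i) ≤ |s| * (ε - r i) := by
  rcases le_or_gt 0 s with hs | hs
  · obtain ⟨t, ht, hε⟩ := exists_forall_abs_sub_le_and_sub_lt a r h
    refine ⟨t, ht, fun ε hε₀ => ?_⟩
    obtain ⟨i, hi⟩ := hε ε hε₀
    exact ⟨i, by rw [abs_of_nonneg hs]; exact mul_le_mul_of_nonneg_left hi.le hs⟩
  · obtain ⟨t, ht, hε⟩ := exists_forall_abs_sub_le_and_sub_lt (-a) r fun i j => by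
      simp only [Pi.neg_apply]; linarith [h j i]
    refine ⟨-t, fun i => by simpa [abs_sub_comm, add_comm] using ht i, fun ε hε₀ => ?_⟩
    obtain ⟨i, hi⟩ := hε ε hε₀
    refine ⟨i, ?_⟩
    rw [abs_of_neg hs]
    simp only [Pi.neg_apply] at hi
    nlinarith

theorem lp.exists_mem_iInter_closedBall_forall_mul_sub_le {ι : Type*} [Nonempty ι]
    (c : ι → ℓ^∞(ℕ, ℝ)) (r : ι → ℝ) (hcr : ∀ i j, dist (c i) (c j) ≤ r i + r j) (u : ℕ → ℝ) :
    ∃ y ∈ ⋂ i, closedBall (c i) (r i),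
      ∀ n, ∀ ε > 0, ∃ i, u n * (y n - c i n) ≤ |u n| * (ε - r i) := by
  have hr : ∀ i, 0 ≤ r i := fun i => by linarith [hcr i i, dist_self (c i)]
  have hcoord : ∀ n i j, c i n - r i ≤ c j n + r j := fun n i j => by
    linarith [le_abs_self (c i n - c j n), (lp.dist_apply_le_dist (c i) (c j) n).trans (hcr i j),
      Real.dist_eq (c i n) (c j n)]
  choose t ht hε using fun n =>
    exists_forall_abs_sub_le_and_mul_sub_le (c · n) r (hcoord n) (u n)
  obtain ⟨i₀⟩ := ‹Nonempty ι›
  have ht_mem : Memℓp t ∞ := memℓp_infty ⟨‖c i₀‖ + r i₀, forall_mem_range.2 fun n => by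
    linarith [Real.norm_eq_abs (t n), abs_sub_abs_le_abs_sub (t n) (c i₀ n), ht n i₀,
      Real.norm_eq_abs (c i₀ n), lp.norm_apply_le_norm ENNReal.top_ne_zero (c i₀) n]⟩
  exact ⟨⟨t, ht_mem⟩, mem_iInter.2 fun i => mem_closedBall.2 <|
    lp.dist_le_of_forall_dist_le (hr i) fun n => (Real.dist_eq _ _).trans_le (ht n i), hε⟩

section KernelOfWeightedSum

variable {u : ℕ → ℝ}

theorem summable_mul_lp_infty (hu : Summable fun n => |u n|) (x : ℓ^∞(ℕ, ℝ)) :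
    Summable fun n => u n * x n :=
  .of_norm_bounded (hu.mul_right ‖x‖) fun n => by
    rw [norm_mul, Real.norm_eq_abs]
    exact mul_le_mul_of_nonneg_left (lp.norm_apply_le_norm ENNReal.top_ne_zero x n) (abs_nonneg _)

noncomputable def weightedSum (u : ℕ → ℝ) (hu : Summable fun n => |u n|) :
    ℓ^∞(ℕ, ℝ) →ₗ[ℝ] ℝ where
  toFun x := ∑' n, u n * x n
  map_add' x y := by
    simp only [lp.coeFn_add, Pi.add_apply, mul_add]
    exact (summable_mul_lp_infty hu x).tsum_add (summable_mul_lp_infty hu y)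
  map_smul' c x := by simp [mul_left_comm _ c, tsum_mul_left]

theorem weightedSum_apply (hu : Summable fun n => |u n|) (x : ℓ^∞(ℕ, ℝ)) :
    weightedSum u hu x = ∑' n, u n * x n :=
  rfl

theorem sum_sub_mul_le_tsum_mul (hu : Summable fun n => |u n|) (x : ℓ^∞(ℕ, ℝ))
    (F : Finset ℕ) {l : ℕ → ℝ} {β : ℝ} (hl : ∀ n ∈ F, l n ≤ u n * x n) (hβ : ∀ n ∉ F, |x n| ≤ β) :
    ∑ n ∈ F, l n - β * (∑' n, |u n| - ∑ n ∈ F, |u n|) ≤ ∑' n, u n * x n := by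
  have hx := summable_mul_lp_infty hu x
  have htail : -(β * ∑' n : ↑(↑F : Set ℕ)ᶜ, |u n|) ≤ ∑' n : ↑(↑F : Set ℕ)ᶜ, u n * x n := by
    rw [← tsum_mul_left, ← tsum_neg]
    refine Summable.tsum_le_tsum (fun n => ?_) ((hu.subtype _).mul_left β).neg (hx.subtype _)
    have := mul_le_mul_of_nonneg_left (hβ n n.2) (abs_nonneg (u n))
    rw [← abs_mul] at this
    linarith [neg_abs_le (u n * x n)]
  rw [← hx.sum_add_tsum_compl (s := F), ← hu.sum_add_tsum_compl (s := F), add_sub_cancel_left]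
  linarith [Finset.sum_le_sum hl]

theorem exists_mem_iInter_closedBall_tsum_mul_nonpos (hu : Summable fun n => |u n|) {m : ℕ}
    (hm : ∑' n, |u n| ≤ 2 * |u m|) {ι : Type*} [Nonempty ι] (c : ι → ℓ^∞(ℕ, ℝ)) (r : ι → ℝ)
    (hcr : ∀ i j, dist (c i) (c j) ≤ r i + r j) (hc : ∀ i, ∑' n, u n * c i n = 0) :
    ∃ y ∈ ⋂ i, closedBall (c i) (r i), ∑' n, u n * y n ≤ 0 := by
  obtain ⟨y, hy, hε⟩ := lp.exists_mem_iInter_closedBall_forall_mul_sub_le c r hcr u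
  refine ⟨y, hy, le_of_forall_pos_le_add fun ε hε₀ => ?_⟩
  obtain ⟨i, hi⟩ := hε m (ε / (|u m| + 1)) (by positivity)
  have hyi : ∀ n, |c i n - y n| ≤ r i := fun n => by
    simpa [Real.dist_eq, abs_sub_comm] using
      (lp.dist_apply_le_dist y (c i) n).trans (mem_closedBall.1 (mem_iInter.1 hy i))
  have hr : 0 ≤ r i := (abs_nonneg _).trans (hyi 0)
  have hΦ := sum_sub_mul_le_tsum_mul hu (c i - y) {m} (l := fun n => u n * (c i n - y n))
    (β := r i) (fun n _ => le_rfl) fun n _ => hyi n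
  have hsub : ∑' n, u n * (c i - y) n = -∑' n, u n * y n := by
    rw [← weightedSum_apply hu, map_sub, weightedSum_apply, weightedSum_apply, hc i, zero_sub]
  rw [hsub, Finset.sum_singleton, Finset.sum_singleton] at hΦ
  have hε' : |u m| * (ε / (|u m| + 1)) ≤ ε := by
    rw [← mul_div_assoc, div_le_iff₀ (by positivity)]
    nlinarith [abs_nonneg (u m)]
  have : r i * (∑' n, |u n| - 2 * |u m|) ≤ 0 := mul_nonpos_of_nonneg_of_nonpos hr (by linarith)
  linarith

theorem hyperconvex_setOf_tsum_mul_eq_zero (hu : Summable fun n => |u n|) {m : ℕ}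
    (hm : ∑' n, |u n| ≤ 2 * |u m|) : Hyperconvex {x : ℓ^∞(ℕ, ℝ) | ∑' n, u n * x n = 0} := by
  intro D hD
  rcases D.eq_empty_or_nonempty with rfl | hne
  · exact ⟨⟨0, by simp⟩, fun _ h => h.elim⟩
  have := hne.to_subtype
  let c : D → ℓ^∞(ℕ, ℝ) := fun p => p.1.1
  let r : D → ℝ := fun p => p.1.2
  have hcr : ∀ p q, dist (c p) (c q) ≤ r p + r q := fun p q => hD _ p.2 _ q.2
  have hc : ∀ p, ∑' n, u n * c p n = 0 := fun p => p.1.1.2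
  obtain ⟨y₁, hy₁, hΦ₁⟩ := exists_mem_iInter_closedBall_tsum_mul_nonpos hu hm c r hcr hc
  obtain ⟨y₂, hy₂, hΦ₂⟩ := exists_mem_iInter_closedBall_tsum_mul_nonpos (u := -u)
    (by simpa using hu) (by simpa using hm) c r hcr (by simpa [tsum_neg] using hc)
  obtain ⟨z, hz, hz₀⟩ := (convex_iInter fun p => convex_closedBall (c p) (r p)
    ).exists_mem_eq_zero_of_nonpos_of_nonneg (weightedSum u hu) hy₁ hy₂ hΦ₁
    (by simpa [weightedSum_apply, tsum_neg] using hΦ₂)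
  exact ⟨⟨z, hz₀⟩, fun p hp => mem_closedBall.1 (mem_iInter.1 hz ⟨p, hp⟩)⟩

noncomputable def spikeCenter (u : ℕ → ℝ) (F : Finset ℕ) (k : ℕ) (a : ℝ) : ℕ → ℝ :=
  fun n => SignType.sign (u n) * ((if n = k then a else 0) - if n ∈ F then 1 else 0)

theorem spikeCenter_of_notMem {F : Finset ℕ} {k n : ℕ} (hk : k ∈ F) (hn : n ∉ F) (a : ℝ) :
    spikeCenter u F k a n = 0 := by
  simp [spikeCenter, hn, show n ≠ k by rintro rfl; exact hn hk]

theorem memℓp_spikeCenter {F : Finset ℕ} {k : ℕ} (hk : k ∈ F) (a : ℝ) :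
    Memℓp (spikeCenter u F k a) ∞ :=
  (memℓp_zero (F.finite_toSet.subset fun _ hn =>
    by_contra fun hnF => hn (spikeCenter_of_notMem hk hnF a))).of_exponent_ge (by simp)

theorem mul_spikeCenter (u : ℕ → ℝ) (F : Finset ℕ) (k n : ℕ) (a : ℝ) :
    u n * spikeCenter u F k a n = |u n| * ((if n = k then a else 0) - if n ∈ F then 1 else 0) := by
  rw [spikeCenter, ← mul_assoc, self_mul_sign]

theorem tsum_mul_spikeCenter {F : Finset ℕ} {k : ℕ} (hk : k ∈ F) (a : ℝ) :
    ∑' n, u n * spikeCenter u F k a n = |u k| * a - ∑ n ∈ F, |u n| := by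
  rw [tsum_eq_sum fun n hn => by rw [spikeCenter_of_notMem hk hn, mul_zero]]
  simp [mul_spikeCenter, mul_sub, Finset.sum_sub_distrib, hk]

theorem mul_le_of_abs_sub_spikeCenter_le {F : Finset ℕ} {k : ℕ} (hk : k ∈ F) {a r x : ℝ}
    (h : |x - spikeCenter u F k a k| ≤ r) : |u k| * (a - 1 - r) ≤ u k * x := by
  have hck : u k * spikeCenter u F k a k = |u k| * (a - 1) := by simp [mul_spikeCenter, hk]
  have := mul_le_mul_of_nonneg_left h (abs_nonneg (u k))
  rw [← abs_mul] at this
  linarith [neg_abs_le (u k * (x - spikeCenter u F k a k))]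

theorem abs_spikeCenter_sub_le (u : ℕ → ℝ) (F : Finset ℕ) {k j : ℕ} {a b : ℝ} (ha : 0 ≤ a)
    (hb : 0 ≤ b) (n : ℕ) : |spikeCenter u F k a n - spikeCenter u F j b n| ≤ max a b := by
  have hσ : |(SignType.sign (u n) : ℝ)| ≤ 1 := by
    rcases lt_trichotomy (u n) 0 with h | h | h <;> simp [h]
  rw [spikeCenter, spikeCenter, ← mul_sub, abs_mul, sub_sub_sub_cancel_right]
  refine (mul_le_of_le_one_left (abs_nonneg _) hσ).trans (abs_le.2 ⟨?_, ?_⟩) <;>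
    split_ifs <;> linarith [le_max_left a b, le_max_right a b]

theorem not_hyperconvex_setOf_tsum_mul_eq_zero_of_finset (hu : Summable fun n => |u n|)
    {m : ℕ} (hmax : ∀ n, |u n| ≤ |u m|) {F : Finset ℕ} (hmF : m ∈ F) (hF : ∀ n ∈ F, u n ≠ 0)
    (hSF : (∑' n, |u n|) / 2 + |u m| < ∑ n ∈ F, |u n|) :
    ¬ Hyperconvex {x : ℓ^∞(ℕ, ℝ) | ∑' n, u n * x n = 0} := by
  intro hX
  set SF := ∑ n ∈ F, |u n|
  have hpos : ∀ k ∈ F, 0 < |u k| := fun k hk => abs_pos.2 (hF k hk)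
  have hS : 0 ≤ ∑' n, |u n| := tsum_nonneg fun n => abs_nonneg (u n)
  have hSF₀ : 0 < SF := by linarith [hpos m hmF]
  set K := SF / |u m| / 2
  have hKm : SF / |u m| = 2 * K := by ring
  have hK₀ : 0 < K := by linarith [div_pos hSF₀ (hpos m hmF)]
  have hK : ∀ k ∈ F, 2 * K ≤ SF / |u k| := fun k hk =>
    hKm ▸ div_le_div_of_nonneg_left hSF₀.le (hpos k hk) (hmax k)
  let c : F → {x : ℓ^∞(ℕ, ℝ) | ∑' n, u n * x n = 0} := fun k =>
    ⟨⟨spikeCenter u F k (SF / |u k|), memℓp_spikeCenter k.2 _⟩, by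
      simp [tsum_mul_spikeCenter k.2, mul_div_cancel₀ _ (hpos k k.2).ne', SF]⟩
  obtain ⟨⟨x, hx₀⟩, hx⟩ := hX (range fun k => (c k, SF / |u k| - K)) <| by
    rintro _ ⟨k, rfl⟩ _ ⟨j, rfl⟩
    have hk := hK k k.2
    have hj := hK j j.2
    refine lp.dist_le_of_forall_dist_le (by linarith) fun n => ?_
    refine (Real.dist_eq _ _).trans_le
      ((abs_spikeCenter_sub_le u F (by linarith) (by linarith) n).trans ?_)
    rcases le_total (SF / |u k|) (SF / |u j|) with h | h <;> simp [h] <;> linarith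
  have hball : ∀ k ∈ F, ∀ n, |x n - spikeCenter u F k (SF / |u k|) n| ≤ SF / |u k| - K :=
    fun k hk n => by
      simpa [Real.dist_eq] using (lp.dist_apply_le_dist _ _ n).trans (hx _ ⟨⟨k, hk⟩, rfl⟩)
  have hxF : ∀ k ∈ F, (K - 1) * |u k| ≤ u k * x k := fun k hk => by
    linarith [mul_le_of_abs_sub_spikeCenter_le hk (hball k hk k)]
  have hxout : ∀ n ∉ F, |x n| ≤ K := fun n hn => by
    have := hball m hmF n
    rw [spikeCenter_of_notMem hmF hn, sub_zero, hKm] at this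
    linarith
  have := sum_sub_mul_le_tsum_mul hu x F hxF hxout
  rw [show ∑' n, u n * x n = 0 from hx₀, ← Finset.mul_sum] at this
  have hKSF : 2 * K * |u m| = SF := hKm ▸ div_mul_cancel₀ SF (hpos m hmF).ne'
  nlinarith [mul_pos hK₀ (show 0 < 2 * SF - ∑' n, |u n| - 2 * |u m| by linarith)]

theorem exists_finset_lt_sum_abs (hu : Summable fun n => |u n|) {m : ℕ} (hm : u m ≠ 0)
    {a : ℝ} (ha : a < ∑' n, |u n|) :
    ∃ F : Finset ℕ, m ∈ F ∧ (∀ n ∈ F, u n ≠ 0) ∧ a < ∑ n ∈ F, |u n| := by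
  obtain ⟨F₀, hF₀⟩ := (hu.hasSum.eventually (lt_mem_nhds ha)).exists
  refine ⟨insert m (F₀.filter fun n => |u n| ≠ 0), Finset.mem_insert_self _ _,
    fun n hn => ?_, ?_⟩
  · rcases Finset.mem_insert.1 hn with rfl | hn
    · exact hm
    · exact abs_ne_zero.1 (Finset.mem_filter.1 hn).2
  · rw [← Finset.sum_filter_ne_zero] at hF₀
    exact hF₀.trans_le (Finset.sum_le_sum_of_subset_of_nonneg (Finset.subset_insert _ _)
      fun n _ _ => abs_nonneg (u n))

theorem not_hyperconvex_setOf_tsum_mul_eq_zero (hu : Summable fun n => |u n|) {m : ℕ}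
    (hmax : ∀ n, |u n| ≤ |u m|) (hlt : 2 * |u m| < ∑' n, |u n|) :
    ¬ Hyperconvex {x : ℓ^∞(ℕ, ℝ) | ∑' n, u n * x n = 0} := by
  have hm : u m ≠ 0 := fun h => by
    simp only [h, abs_zero] at hmax hlt
    simp [fun n => abs_nonpos_iff.1 (hmax n)] at hlt
  obtain ⟨F, hmF, hF, hSF⟩ := exists_finset_lt_sum_abs hu hm
    (a := (∑' n, |u n|) / 2 + |u m|) (by linarith)
  exact not_hyperconvex_setOf_tsum_mul_eq_zero_of_finset hu hmax hmF hF hSF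

end KernelOfWeightedSum

theorem l1_functional_kernel_injective_iff_general (u : ℕ → ℝ)
    (hsum : Summable fun n => |u n|) :
    IsInjectiveMetricSpace.{0, v, w}
        {x : lp (fun _ : ℕ => ℝ) ⊤ | ∑' n, u n * x n = 0} ↔
      ∑' n, |u n| ≤ 2 * ⨆ n, |u n| := by
  obtain ⟨m, hm⟩ := exists_forall_abs_le_abs_of_tendsto_zero hsum.of_abs.tendsto_cofinite_zero
  rw [le_antisymm (ciSup_le hm) (le_ciSup ⟨|u m|, forall_mem_range.2 hm⟩ m)]
  refine ⟨fun hinj => not_lt.1 fun hlt => ?_, fun hle =>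
    (hyperconvex_setOf_tsum_mul_eq_zero hsum hle).isInjectiveMetricSpace⟩
  exact not_hyperconvex_setOf_tsum_mul_eq_zero hsum hm hlt hinj.hyperconvex

/-- For a non-zero absolutely summable sequence `u ∈ l_1(ℕ)`, the kernel of the
functional `Φ(x) = ∑' n, u n * x n` on `l_∞(ℕ)` is injective with the induced metric if
and only if `‖u‖₁ ≤ 2 ‖u‖_∞`. -/
theorem l1_functional_kernel_injective_iff (u : ℕ → ℝ)
    (hsum : Summable fun n => |u n|) (hu : u ≠ 0) :
    IsInjectiveMetricSpace.{0, v, w}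
        {x : lp (fun _ : ℕ => ℝ) ⊤ | ∑' n, u n * x n = 0} ↔
      ∑' n, |u n| ≤ 2 * ⨆ n, |u n| :=
  l1_functional_kernel_injective_iff_general u hsum
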